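/- Let p be an odd prime and suppose a complex amplitude has the form A(a,b) = p^{-(n+α)/2} ∑_{x ∈ F_p^α} χ(S_{a,b}(x)), where S_{a,b}(x) = xᵀΘx + η(a,b)ᵀx + ζ(a,b) with Θ symmetric and independent of (a,b). Then every nonzero value of |A(a,b)| equals p^{-(n+r−α)/2}, where r = rank(Θ); in particular |A(a,b)|² ∈ {0, p^{-(n+r−α)}} for all a, b. -/

import Mathlib

open Complex Matrix BigOperators

noncomputable def χ (p : ℕ) (a : ZMod p) : ℂ :=
  Complex.exp (2 * Real.pi * Complex.I * (a.val : ℂ) / p)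

section Aux
variable {p : ℕ} [NeZero p]

lemma chi_eq_stdAddChar (a : ZMod p) : χ p a = ZMod.stdAddChar a := by
  rw [ZMod.stdAddChar_apply, ZMod.toCircle_apply]
  rfl

lemma conj_stdAddChar (a : ZMod p) :
    (starRingEnd ℂ) (ZMod.stdAddChar a) = ZMod.stdAddChar (-a) := by
  rw [ZMod.stdAddChar_apply, ZMod.stdAddChar_apply, ← Circle.coe_inv_eq_conj,
    ← AddChar.map_neg_eq_inv]

end Aux

section Aux2
variable {p α : ℕ} [NeZero p]

/-- The additive character `y ↦ χ(c ⬝ᵥ y)` on `Fin α → ZMod p`. -/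
noncomputable def dotChar (c : Fin α → ZMod p) : AddChar (Fin α → ZMod p) ℂ :=
  (ZMod.stdAddChar).compAddMonoidHom
    { toFun := fun y => c ⬝ᵥ y
      map_zero' := dotProduct_zero c
      map_add' := fun y z => dotProduct_add c y z }

@[simp] lemma dotChar_apply (c y : Fin α → ZMod p) :
    dotChar c y = ZMod.stdAddChar (c ⬝ᵥ y) := rfl

lemma sum_dotChar (c : Fin α → ZMod p) :
    ∑ y : Fin α → ZMod p, ZMod.stdAddChar (c ⬝ᵥ y) =
      if c = 0 then ((p : ℂ) ^ α) else 0 := by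
  split_ifs with hc
  · subst hc
    simp [zero_dotProduct, Fintype.card_pi, ZMod.card]
  · have : ∃ i, c i ≠ 0 := by
      by_contra h
      push_neg at h
      exact hc (funext h)
    obtain ⟨i, hi⟩ := this
    have hne : dotChar c ≠ 1 := by
      rw [AddChar.ne_one_iff]
      refine ⟨Pi.single i 1, ?_⟩
      rw [dotChar_apply]
      have : c ⬝ᵥ Pi.single i 1 = c i := by
        simp [dotProduct_single]
      rw [this]
      intro hone
      exact hi (ZMod.injective_stdAddChar (by rw [hone, AddChar.map_zero_eq_one]))
    simpa using AddChar.sum_eq_zero_of_ne_one hne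

end Aux2

section Key
variable {p α : ℕ} [Fact p.Prime]

lemma key_abs_sq (hp : Odd p) (Θ : Matrix (Fin α) (Fin α) (ZMod p)) (hΘ : Θ.IsSymm)
    (η : Fin α → ZMod p) (ζ : ZMod p) :
    ‖(∑ x : Fin α → ZMod p, χ p (x ⬝ᵥ (Θ *ᵥ x) + η ⬝ᵥ x + ζ))‖ ^ 2 = 0 ∨
    ‖(∑ x : Fin α → ZMod p, χ p (x ⬝ᵥ (Θ *ᵥ x) + η ⬝ᵥ x + ζ))‖ ^ 2
      = (p : ℝ) ^ α * (p : ℝ) ^ (α - Θ.rank) := by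
  have h2 : (2 : ZMod p) ≠ 0 := by
    intro h
    have hdvd : p ∣ 2 := by
      have := (ZMod.natCast_eq_zero_iff 2 p).mp (by exact_mod_cast h)
      exact this
    have hp2 : p = 2 := (Nat.prime_dvd_prime_iff_eq Fact.out Nat.prime_two).mp hdvd
    rw [hp2] at hp
    exact (by norm_num : ¬ Odd 2) hp
  have hsym : ∀ u v : Fin α → ZMod p, u ⬝ᵥ (Θ *ᵥ v) = v ⬝ᵥ (Θ *ᵥ u) := by
    intro u v
    rw [Matrix.dotProduct_mulVec, ← Matrix.mulVec_transpose, hΘ.eq, dotProduct_comm]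
  set f : (Fin α → ZMod p) → ZMod p := fun x => x ⬝ᵥ (Θ *ᵥ x) + η ⬝ᵥ x + ζ with hf_def
  set S : ℂ := ∑ x : Fin α → ZMod p, ZMod.stdAddChar (f x) with hS_def
  have hSrw : ∑ x : Fin α → ZMod p, χ p (x ⬝ᵥ (Θ *ᵥ x) + η ⬝ᵥ x + ζ) = S := by
    rw [hS_def]
    exact Finset.sum_congr rfl fun x _ => chi_eq_stdAddChar _
  rw [hSrw]
  set K : Submodule (ZMod p) (Fin α → ZMod p) := LinearMap.ker Θ.mulVecLin with hK_def
  haveI : Fintype ↥K := Fintype.ofFinite _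
  have hf : ∀ y t : Fin α → ZMod p,
      f (y + t) + -(f y) = (t ⬝ᵥ (Θ *ᵥ t) + η ⬝ᵥ t) + ((2 : ZMod p) • (Θ *ᵥ t)) ⬝ᵥ y := by
    intro y t
    have e1 : Θ *ᵥ (y + t) = Θ *ᵥ y + Θ *ᵥ t := Matrix.mulVec_add Θ y t
    have e2 : t ⬝ᵥ (Θ *ᵥ y) = y ⬝ᵥ (Θ *ᵥ t) := hsym t y
    have e3 : ((2 : ZMod p) • (Θ *ᵥ t)) ⬝ᵥ y = 2 * (y ⬝ᵥ (Θ *ᵥ t)) := by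
      rw [smul_dotProduct, dotProduct_comm]
      simp [smul_eq_mul]
    simp only [hf_def, e1, dotProduct_add, add_dotProduct, e2, e3]
    ring
  have hSS : S * (starRingEnd ℂ) S
      = (p : ℂ) ^ α * ∑ t : ↥K, ZMod.stdAddChar (η ⬝ᵥ (t : Fin α → ZMod p)) := by
    calc S * (starRingEnd ℂ) S
        = ∑ x : Fin α → ZMod p, ∑ y : Fin α → ZMod p,
            ZMod.stdAddChar (f x) * ZMod.stdAddChar (-(f y)) := by
          rw [hS_def, map_sum, Finset.sum_mul_sum]
          simp only [conj_stdAddChar]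
      _ = ∑ y : Fin α → ZMod p, ∑ x : Fin α → ZMod p,
            ZMod.stdAddChar (f x + -(f y)) := by
          rw [Finset.sum_comm]
          simp only [AddChar.map_add_eq_mul]
      _ = ∑ y : Fin α → ZMod p, ∑ t : Fin α → ZMod p,
            ZMod.stdAddChar (f (y + t) + -(f y)) := by
          refine Finset.sum_congr rfl fun y _ => ?_
          exact (Equiv.sum_comp (Equiv.addLeft y)
            (fun x => ZMod.stdAddChar (f x + -(f y)))).symm
      _ = ∑ t : Fin α → ZMod p, ZMod.stdAddChar (t ⬝ᵥ (Θ *ᵥ t) + η ⬝ᵥ t) *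
            ∑ y : Fin α → ZMod p, ZMod.stdAddChar (((2 : ZMod p) • (Θ *ᵥ t)) ⬝ᵥ y) := by
          rw [Finset.sum_comm]
          refine Finset.sum_congr rfl fun t _ => ?_
          rw [Finset.mul_sum]
          refine Finset.sum_congr rfl fun y _ => ?_
          rw [hf y t, AddChar.map_add_eq_mul]
      _ = ∑ t : Fin α → ZMod p,
            (if Θ *ᵥ t = 0 then (p : ℂ) ^ α * ZMod.stdAddChar (η ⬝ᵥ t) else 0) := by
          refine Finset.sum_congr rfl fun t _ => ?_
          rw [sum_dotChar]
          by_cases h : Θ *ᵥ t = 0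
          · rw [if_pos (by rw [h, smul_zero]), if_pos h, h, dotProduct_zero, zero_add]
            ring
          · rw [if_neg (fun hc => h ((smul_eq_zero.mp hc).resolve_left h2)), if_neg h,
              mul_zero]
      _ = (p : ℂ) ^ α * ∑ t : ↥K, ZMod.stdAddChar (η ⬝ᵥ (t : Fin α → ZMod p)) := by
          rw [Finset.mul_sum, ← Finset.sum_filter]
          exact Finset.sum_subtype _ (fun x => by
            simp [hK_def, LinearMap.mem_ker, Matrix.mulVecLin_apply]) _
  -- the kernel sum is either 0 or the cardinality of K
  set ψK : AddChar ↥K ℂ := (ZMod.stdAddChar).compAddMonoidHom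
    { toFun := fun t : ↥K => η ⬝ᵥ (t : Fin α → ZMod p)
      map_zero' := by simp
      map_add' := fun s t => by
        simp [dotProduct_add] } with hψK_def
  have hψa : ∀ t : ↥K, ZMod.stdAddChar (η ⬝ᵥ (t : Fin α → ZMod p)) = ψK t := fun t => rfl
  have hcardK : Fintype.card ↥K = p ^ (α - Θ.rank) := by
    have h1 : Fintype.card ↥K = Fintype.card (ZMod p) ^ Module.finrank (ZMod p) ↥K :=
      Module.card_eq_pow_finrank
    have h2 : Θ.rank + Module.finrank (ZMod p) ↥K = α := by
      have := LinearMap.finrank_range_add_finrank_ker Θ.mulVecLin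
      rwa [Module.finrank_pi, Fintype.card_fin] at this
    rw [h1, ZMod.card]
    congr 1
    omega
  have hT : (∑ t : ↥K, ZMod.stdAddChar (η ⬝ᵥ (t : Fin α → ZMod p))) = (Fintype.card ↥K : ℂ)
      ∨ (∑ t : ↥K, ZMod.stdAddChar (η ⬝ᵥ (t : Fin α → ZMod p))) = 0 := by
    simp only [hψa]
    by_cases h : ψK = 1
    · exact Or.inl (AddChar.sum_eq_card_of_eq_one h)
    · exact Or.inr (AddChar.sum_eq_zero_of_ne_one h)
  have habs : ((‖S‖ ^ 2 : ℝ) : ℂ) = S * (starRingEnd ℂ) S := by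
    rw [Complex.mul_conj, Complex.sq_norm]
  rcases hT with h | h
  · right
    have : ((‖S‖ ^ 2 : ℝ) : ℂ) = (((p : ℝ) ^ α * (p : ℝ) ^ (α - Θ.rank) : ℝ) : ℂ) := by
      rw [habs, hSS, h, hcardK]
      push_cast
      ring
    exact_mod_cast this
  · left
    have : ((‖S‖ ^ 2 : ℝ) : ℂ) = 0 := by
      rw [habs, hSS, h, mul_zero]
    exact_mod_cast this

end Key

theorem clifford_amplitudes_balanced (p n α : ℕ) [Fact p.Prime] (hp : Odd p)
    {I J : Type*}
    (Θ : Matrix (Fin α) (Fin α) (ZMod p)) (hΘ : Θ.IsSymm)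
    (η : I → J → (Fin α → ZMod p)) (ζ : I → J → ZMod p) (A : I → J → ℂ)
    (hA : ∀ a b, A a b = ((p : ℝ) ^ (-(((n : ℝ) + α) / 2)) : ℝ) *
      ∑ x : Fin α → ZMod p, χ p (x ⬝ᵥ (Θ *ᵥ x) + η a b ⬝ᵥ x + ζ a b)) :
    (∀ a b, A a b ≠ 0 →
      ‖A a b‖ = (p : ℝ) ^ (-(((n : ℝ) + (Θ.rank : ℝ) - α) / 2))) ∧
    (∀ a b, ‖A a b‖ ^ 2 = 0 ∨
      ‖A a b‖ ^ 2 = (p : ℝ) ^ (-((n : ℝ) + (Θ.rank : ℝ) - α))) := by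
  have hp0 : (0 : ℝ) < p := by
    exact_mod_cast (Fact.out (p := p.Prime)).pos
  have hr : Θ.rank ≤ α := le_trans (Matrix.rank_le_card_width Θ) (by simp)
  set c : ℝ := (p : ℝ) ^ (-(((n : ℝ) + α) / 2)) with hc_def
  have hc : 0 ≤ c := Real.rpow_nonneg hp0.le _
  have key2 : ∀ a b, ‖A a b‖ ^ 2 = 0 ∨
      ‖A a b‖ ^ 2 = (p : ℝ) ^ (-((n : ℝ) + (Θ.rank : ℝ) - α)) := by
    intro a b
    have habs : ‖A a b‖ = c * ‖(∑ x : Fin α → ZMod p,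
        χ p (x ⬝ᵥ (Θ *ᵥ x) + η a b ⬝ᵥ x + ζ a b))‖ := by
      rw [hA a b, norm_mul, Complex.norm_of_nonneg hc]
    rcases key_abs_sq hp Θ hΘ (η a b) (ζ a b) with h | h
    · left
      rw [habs, mul_pow, h, mul_zero]
    · right
      rw [habs, mul_pow, h]
      have e1 : c ^ 2 = (p : ℝ) ^ (-((n : ℝ) + α)) := by
        rw [hc_def, ← Real.rpow_natCast ((p:ℝ) ^ (-(((n : ℝ) + α) / 2))) 2,
          ← Real.rpow_mul hp0.le]
        congr 1
        push_cast
        ring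
      rw [e1, ← Real.rpow_natCast (p : ℝ) α, ← Real.rpow_natCast (p : ℝ) (α - Θ.rank),
        ← Real.rpow_add hp0, ← Real.rpow_add hp0]
      congr 1
      rw [Nat.cast_sub hr]
      ring
  refine ⟨?_, key2⟩
  intro a b hab
  rcases key2 a b with h | h
  · exact absurd (by
      have := pow_eq_zero_iff (n := 2) (by norm_num) |>.mp h
      exact (norm_eq_zero.mp this)) hab
  · have hA0 : 0 ≤ ‖A a b‖ := norm_nonneg _
    rw [← Real.sqrt_sq hA0, h, Real.sqrt_eq_rpow, ← Real.rpow_mul hp0.le]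
    congr 1
    ring
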